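/- arXiv:1402.2456 — 2 statements merged into one kernel-verified Lean document; each statement's English description precedes it below -/
import Mathlib

section
/- Let X = {x₁, …, x_l} and Y = {−y₁, …, −y_m} be disjoint nonempty sets of even integers, where x₁ > ⋯ > x_l are non-negative even integers and y₁ < ⋯ < y_m are positive even integers, with X ∪ Y ≠ {0}. Let L = x₁ + ⋯ + x_l, M = y₁ + ⋯ + y_m and n = lM + mL. If there exist x_p ∈ X and (not necessarily distinct) −y_q, −y_r ∈ Y such that x_p = y_q + y_r, then there exists a tournament of order n + 3 whose imbalance set is X ∪ Y. -/
/-- A tournament on `Fin n`: loopless, and between any two distinct vertices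
there is exactly one arc. -/
def IsTournament {n : ℕ} (r : Fin n → Fin n → Bool) : Prop :=
  (∀ i, r i i = false) ∧ ∀ i j : Fin n, i ≠ j → (r i j = !(r j i))

/-- The score (outdegree) of vertex `i`. -/
def outdeg {n : ℕ} (r : Fin n → Fin n → Bool) (i : Fin n) : ℕ :=
  (Finset.univ.filter fun j => r i j = true).card

/-- The indegree of vertex `i`. -/
def indeg {n : ℕ} (r : Fin n → Fin n → Bool) (i : Fin n) : ℕ :=
  (Finset.univ.filter fun j => r j i = true).card

/-- The imbalance of vertex `i`: outdegree minus indegree. -/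
def imbalance {n : ℕ} (r : Fin n → Fin n → Bool) (i : Fin n) : ℤ :=
  (outdeg r i : ℤ) - (indeg r i : ℤ)

/-- The imbalance set of a digraph. -/
def imbalanceSet {n : ℕ} (r : Fin n → Fin n → Bool) : Finset ℤ :=
  Finset.image (imbalance r) Finset.univ

/-!
An even sequence `t` on an odd number `N` of vertices with sum `0` is the imbalance sequence of a
tournament as soon as every `k` of its terms sum to at most `k (N - k)`. Start from any tournament
and take a vertex `u` whose imbalance is too small. The set `S` of vertices from which `u` can be
reached beats its complement, so its total imbalance is `|S| |Sᶜ|`, and the condition yields a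
vertex `v ∈ S` whose imbalance is too large; reversing a path from `v` to `u` brings both
imbalances closer to the target, so this terminates.

For the theorem take every `x ∈ X` with multiplicity `M`, every `-y ∈ Y` with multiplicity `L`,
and `x_p, -y_q, -y_r`: these `n + 3` even numbers sum to `ML - LM + x_p - y_q - y_r = 0` and lie in
`[-M, L]` with `L + M ≤ n`, which already forces the condition.
-/

open Finset Relation

theorem Relation.ReflTransGen.exists_head_avoiding {α : Type*} {R : α → α → Prop} {a b : α}
    (h : ReflTransGen R a b) (hab : a ≠ b) :
    ∃ c, R a c ∧ ReflTransGen (fun x y => R x y ∧ x ≠ a ∧ y ≠ a) c b := by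
  induction h with
  | refl => exact absurd rfl hab
  | @tail b' c' _ hstep ih =>
    by_cases hb' : b' = a
    · exact ⟨c', hb' ▸ hstep, .refl⟩
    · obtain ⟨c, hac, hcb⟩ := ih (Ne.symm hb')
      exact ⟨c, hac, hcb.tail ⟨hstep, hb', Ne.symm hab⟩⟩

section Tournament

variable {N : ℕ} {r : Fin N → Fin N → Bool}

theorem IsTournament.ne_of_arc (hr : IsTournament r) {i j : Fin N} (h : r i j = true) :
    i ≠ j := by
  rintro rfl
  simp [hr.1 i] at h

theorem IsTournament.arc_eq_false (hr : IsTournament r) {i j : Fin N} (h : r i j = true) :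
    r j i = false := by
  simpa [h] using hr.2 j i (hr.ne_of_arc h).symm

theorem isTournament_lt : IsTournament fun i j : Fin N => decide (j < i) := by
  refine ⟨fun i => by simp, fun i j hij => ?_⟩
  rcases lt_or_gt_of_ne hij with h | h <;> simp [h, not_lt_of_gt]

theorem outdeg_add_indeg (hr : IsTournament r) (i : Fin N) : outdeg r i + indeg r i = N - 1 := by
  have hdisj : Disjoint (univ.filter fun j => r i j = true) (univ.filter fun j => r j i = true) :=
    disjoint_filter.2 fun j _ h h' => by simp [hr.arc_eq_false h] at h'
  have hunion : (univ.filter fun j => r i j = true) ∪ (univ.filter fun j => r j i = true) =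
      univ.erase i := by
    ext j
    by_cases hji : j = i
    · simp [hji, hr.1 i]
    · have := hr.2 i j (Ne.symm hji)
      cases h : r j i <;> simp_all
  rw [outdeg, indeg, ← card_union_of_disjoint hdisj, hunion, card_erase_of_mem (mem_univ i),
    card_univ, Fintype.card_fin]

theorem even_imbalance (hr : IsTournament r) (hN : Odd N) (i : Fin N) : Even (imbalance r i) := by
  have h := outdeg_add_indeg hr i
  obtain ⟨k, hk⟩ := hN
  exact ⟨outdeg r i - k, by rw [imbalance]; omega⟩

def arcSign (r : Fin N → Fin N → Bool) (i j : Fin N) : ℤ :=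
  (r i j).toInt - (r j i).toInt

theorem arcSign_swap (r : Fin N → Fin N → Bool) (i j : Fin N) :
    arcSign r j i = -arcSign r i j := by
  simp only [arcSign]; ring

theorem arcSign_of_arc (hr : IsTournament r) {i j : Fin N} (h : r i j = true) :
    arcSign r i j = 1 := by
  simp [arcSign, h, hr.arc_eq_false h]

theorem imbalance_eq_sum_arcSign (r : Fin N → Fin N → Bool) (i : Fin N) :
    imbalance r i = ∑ j, arcSign r i j := by
  simp only [imbalance, outdeg, indeg, arcSign, card_filter, sum_sub_distrib]
  push_cast
  congr 1 <;> refine sum_congr rfl fun j _ => ?_ <;> split <;> simp_all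

theorem sum_sum_arcSign_eq_zero (r : Fin N → Fin N → Bool) (S : Finset (Fin N)) :
    ∑ i ∈ S, ∑ j ∈ S, arcSign r i j = 0 := by
  have hswap : ∑ j ∈ S, ∑ i ∈ S, arcSign r i j = -∑ j ∈ S, ∑ i ∈ S, arcSign r j i := by
    rw [← sum_neg_distrib]
    exact sum_congr rfl fun j _ => by
      rw [← sum_neg_distrib]
      exact sum_congr rfl fun i _ => arcSign_swap r j i
  have hcomm : ∑ i ∈ S, ∑ j ∈ S, arcSign r i j = ∑ j ∈ S, ∑ i ∈ S, arcSign r i j := sum_comm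
  linarith

theorem sum_imbalance_eq_sum_compl (r : Fin N → Fin N → Bool) (S : Finset (Fin N)) :
    ∑ i ∈ S, imbalance r i = ∑ i ∈ S, ∑ j ∈ Sᶜ, arcSign r i j := by
  simp only [imbalance_eq_sum_arcSign, ← sum_add_sum_compl S, sum_add_distrib,
    sum_sum_arcSign_eq_zero, zero_add]

theorem sum_imbalance (r : Fin N → Fin N → Bool) : ∑ i, imbalance r i = 0 := by
  simpa using sum_imbalance_eq_sum_compl r univ

theorem sum_imbalance_of_forall_arc_compl (hr : IsTournament r) {S : Finset (Fin N)}
    (hS : ∀ i ∈ S, ∀ j ∉ S, r i j = true) :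
    ∑ i ∈ S, imbalance r i = #S * #Sᶜ := by
  rw [sum_imbalance_eq_sum_compl]
  have h : ∀ i ∈ S, ∑ j ∈ Sᶜ, arcSign r i j = #Sᶜ := fun i hi => by
    simp [sum_congr rfl fun j hj => arcSign_of_arc hr (hS i hi j (mem_compl.1 hj))]
  simp [sum_congr rfl h]

def reverseArc (r : Fin N → Fin N → Bool) (a b : Fin N) : Fin N → Fin N → Bool :=
  fun i j => if i = a ∧ j = b then false else if i = b ∧ j = a then true else r i j

theorem reverseArc_of_ne {a i j : Fin N} (b : Fin N) (hi : i ≠ a) (hj : j ≠ a) :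
    reverseArc r a b i j = r i j := by
  simp [reverseArc, hi, hj]

theorem isTournament_reverseArc (hr : IsTournament r) {a b : Fin N} (hab : a ≠ b) :
    IsTournament (reverseArc r a b) := by
  refine ⟨fun i => ?_, fun i j hij => ?_⟩
  · have := hr.1 i
    simp only [reverseArc]
    split_ifs <;> grind
  · have := hr.2 i j hij
    simp only [reverseArc]
    split_ifs <;> simp_all

theorem arcSign_reverseArc (hr : IsTournament r) {a b : Fin N} (hab : r a b = true)
    (i j : Fin N) :
    arcSign (reverseArc r a b) i j = arcSign r i j
      - (if i = a ∧ j = b then 2 else 0) + (if i = b ∧ j = a then 2 else 0) := by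
  have hba := hr.arc_eq_false hab
  have hne := hr.ne_of_arc hab
  simp only [arcSign, reverseArc]
  split_ifs <;> simp_all

theorem imbalance_reverseArc (hr : IsTournament r) {a b : Fin N} (hab : r a b = true) :
    imbalance (reverseArc r a b) = imbalance r - Pi.single a 2 + Pi.single b 2 := by
  funext i
  simp only [imbalance_eq_sum_arcSign, arcSign_reverseArc hr hab, sum_add_distrib,
    sum_sub_distrib, Pi.add_apply, Pi.sub_apply, Pi.single_apply]
  congr 2 <;> split_ifs <;> simp_all

theorem IsTournament.exists_imbalance_transfer (hr : IsTournament r) (T : Finset (Fin N))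
    {v u : Fin N} (hvu : v ≠ u)
    (hpath : ReflTransGen (fun a b => r a b = true ∧ a ∈ T ∧ b ∈ T) v u) :
    ∃ r', IsTournament r' ∧ imbalance r' = imbalance r - Pi.single v 2 + Pi.single u 2 := by
  induction T using Finset.strongInduction generalizing r v with
  | H T ih =>
  -- a path from `w` avoiding `v` is still a path after the arc `v → w` is reversed
  obtain ⟨w, ⟨hvw, hvT, -⟩, hwu⟩ := hpath.exists_head_avoiding hvu
  have hr₁ := isTournament_reverseArc hr (hr.ne_of_arc hvw)
  have himb₁ := imbalance_reverseArc hr hvw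
  by_cases hw : w = u
  · exact ⟨_, hr₁, hw ▸ himb₁⟩
  have hwu₁ : ReflTransGen
      (fun a b => reverseArc r v w a b = true ∧ a ∈ T.erase v ∧ b ∈ T.erase v) w u :=
    ReflTransGen.mono (fun a b ⟨⟨hab, haT, hbT⟩, hav, hbv⟩ =>
      ⟨by rwa [reverseArc_of_ne w hav hbv], mem_erase.2 ⟨hav, haT⟩, mem_erase.2 ⟨hbv, hbT⟩⟩)
      _ _ hwu
  obtain ⟨r₂, hr₂, himb₂⟩ := ih _ (erase_ssubset hvT) hr₁ hw hwu₁
  exact ⟨r₂, hr₂, by rw [himb₂, himb₁]; abel⟩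

end Tournament

section Realization

variable {N : ℕ} {t : Fin N → ℤ} {r : Fin N → Fin N → Bool}

def imbalanceGap (t : Fin N → ℤ) (r : Fin N → Fin N → Bool) : ℕ :=
  ∑ i, (t i - imbalance r i).natAbs

theorem exists_imbalanceGap_lt (hN : Odd N) (heven : ∀ i, Even (t i)) (hsum : ∑ i, t i = 0)
    (hcond : ∀ S : Finset (Fin N), ∑ i ∈ S, t i ≤ #S * #Sᶜ) (hr : IsTournament r)
    (hne : imbalance r ≠ t) :
    ∃ r', IsTournament r' ∧ imbalanceGap t r' < imbalanceGap t r := by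
  classical
  obtain ⟨u, hu⟩ : ∃ u, imbalance r u < t u := by
    by_contra! hge
    refine hne (funext fun i => ?_)
    have := (sum_eq_sum_iff_of_le fun i _ => hge i).1 (by rw [hsum, sum_imbalance])
    exact (this i (mem_univ i)).symm
  set S := univ.filter fun w => ReflTransGen (fun a b => r a b = true) w u
  have hS : ∀ i ∈ S, ∀ j ∉ S, r i j = true := by
    intro i hi j hj
    simp only [S, mem_filter, mem_univ, true_and] at hi hj
    have hji : r j i = false := by
      by_contra h
      exact hj (hi.head (Bool.not_eq_false _ ▸ h))
    simpa [hji] using hr.2 i j (by rintro rfl; exact hj hi)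
  obtain ⟨v, hvS, hv⟩ : ∃ v ∈ S, t v < imbalance r v := by
    by_contra! hle
    have hlt := sum_lt_sum hle ⟨u, mem_filter.2 ⟨mem_univ u, .refl⟩, hu⟩
    rw [sum_imbalance_of_forall_arc_compl hr hS] at hlt
    exact (hcond S).not_gt hlt
  have hvu : v ≠ u := by rintro rfl; omega
  have hpath : ReflTransGen (fun a b => r a b = true ∧ a ∈ univ ∧ b ∈ univ) v u :=
    ReflTransGen.mono (fun a b h => ⟨h, mem_univ a, mem_univ b⟩) _ _ (mem_filter.1 hvS).2
  obtain ⟨r', hr', himb⟩ := hr.exists_imbalance_transfer univ hvu hpath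
  have hdiff : ∀ i, t i - imbalance r' i =
      t i - imbalance r i + (if i = v then 2 else 0) - (if i = u then 2 else 0) := fun i => by
    simp only [himb, Pi.add_apply, Pi.sub_apply, Pi.single_apply]; ring
  have heven' : ∀ i, Even (t i - imbalance r i) := fun i => (heven i).sub (even_imbalance hr hN i)
  refine ⟨r', hr', sum_lt_sum (fun i _ => ?_) ⟨u, mem_univ u, ?_⟩⟩
  · obtain ⟨k, hk⟩ := heven' i
    rw [hdiff]
    split_ifs <;> subst_vars <;> omega
  · obtain ⟨k, hk⟩ := heven' u
    rw [hdiff, if_neg hvu.symm, if_pos rfl]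
    omega

theorem exists_isTournament_imbalance_eq (hN : Odd N) (heven : ∀ i, Even (t i))
    (hsum : ∑ i, t i = 0) (hcond : ∀ S : Finset (Fin N), ∑ i ∈ S, t i ≤ #S * #Sᶜ) :
    ∃ r, IsTournament r ∧ imbalance r = t := by
  classical
  obtain ⟨r, hr, hmin⟩ := (univ.filter IsTournament).exists_min_image (imbalanceGap t)
    ⟨_, mem_filter.2 ⟨mem_univ _, isTournament_lt⟩⟩
  rw [mem_filter] at hr
  refine ⟨r, hr.2, by_contra fun hne => ?_⟩
  obtain ⟨r', hr', hlt⟩ := exists_imbalanceGap_lt hN heven hsum hcond hr.2 hne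
  exact (hmin r' (mem_filter.2 ⟨mem_univ _, hr'⟩)).not_gt hlt

end Realization

theorem mem_Icc_sum_of_mem_union {α : Type*} [AddCommGroup α] [PartialOrder α]
    [IsOrderedAddMonoid α] [DecidableEq α] {X Y : Finset α} (hX : ∀ x ∈ X, 0 ≤ x)
    (hY : ∀ y ∈ Y, y ≤ 0) {a : α} (ha : a ∈ X ∪ Y) :
    a ∈ Set.Icc (∑ y ∈ Y, y) (∑ x ∈ X, x) := by
  rcases mem_union.1 ha with hx | hy
  · exact ⟨(sum_nonpos hY).trans (hX a hx), single_le_sum hX hx⟩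
  · refine ⟨?_, (hY a hy).trans (sum_nonneg hX)⟩
    have := single_le_sum (f := Neg.neg) (fun y hy => neg_nonneg.2 (hY y hy)) hy
    rwa [sum_neg_distrib, neg_le_neg_iff] at this

theorem sum_le_card_mul_card_compl {ι : Type*} [Fintype ι] [DecidableEq ι] {t : ι → ℤ} {a b : ℤ}
    (hsum : ∑ i, t i = 0) (hbound : ∀ i, t i ∈ Set.Icc a b) (hab : b - a ≤ Fintype.card ι)
    (S : Finset ι) :
    ∑ i ∈ S, t i ≤ #S * #Sᶜ := by
  have hcard : (#S : ℤ) + #Sᶜ = Fintype.card ι := by exact_mod_cast card_add_card_compl S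
  have hS : ∑ i ∈ S, t i ≤ #S * b := by simpa using sum_le_sum fun i (_ : i ∈ S) => (hbound i).2
  have hSc : ∑ i ∈ S, t i ≤ #Sᶜ * -a := by
    have := sum_le_sum fun i (_ : i ∈ Sᶜ) => (hbound i).1
    rw [← sum_add_sum_compl S t] at hsum
    simp only [sum_const, nsmul_eq_mul] at this
    linarith
  rcases le_or_gt b #Sᶜ with h | h
  · nlinarith [(#S).cast_nonneg (α := ℤ)]
  · nlinarith [(#Sᶜ).cast_nonneg (α := ℤ)]

theorem Multiset.exists_univ_map_eq {α : Type*} (m : Multiset α) {N : ℕ} (hN : card m = N) :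
    ∃ t : Fin N → α, univ.val.map t = m := by
  induction m using Quotient.inductionOn with
  | h l =>
    subst hN
    exact ⟨fun i => l[i.val], by rw [Fin.univ_val_map]; exact congrArg _ List.ofFn_getElem⟩

theorem Multiset.mem_nsmul_add_nsmul_add_iff {α : Type*} [DecidableEq α] {X Y : Finset α}
    {e : Multiset α} {k l : ℕ} (hk : k ≠ 0) (hl : l ≠ 0) (he : ∀ a ∈ e, a ∈ X ∪ Y) (a : α) :
    a ∈ k • X.val + l • Y.val + e ↔ a ∈ X ∪ Y := by
  simp only [Multiset.mem_add, Multiset.mem_nsmul, hk, hl, ne_eq, not_false_eq_true, true_and,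
    mem_val]
  exact ⟨fun h => h.elim (Finset.mem_union.2 ·) (he a), fun h => .inl (Finset.mem_union.1 h)⟩

theorem exists_isTournament_imbalanceSet_eq {N : ℕ} {s : Finset ℤ} {m : Multiset ℤ}
    (hm : ∀ x, x ∈ m ↔ x ∈ s) (hcard : Multiset.card m = N) (hN : Odd N) (hsum : m.sum = 0)
    (heven : ∀ x ∈ s, Even x) {a b : ℤ} (hbound : ∀ x ∈ s, x ∈ Set.Icc a b) (hab : b - a ≤ N) :
    ∃ r : Fin N → Fin N → Bool, IsTournament r ∧ imbalanceSet r = s := by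
  obtain ⟨t, rfl⟩ := m.exists_univ_map_eq hcard
  simp only [Multiset.mem_map, mem_val, mem_univ, true_and] at hm
  have hts : ∀ i, t i ∈ s := fun i => (hm _).1 ⟨i, rfl⟩
  have hsum' : ∑ i, t i = 0 := by rwa [sum_eq_multiset_sum]
  obtain ⟨r, hr, rfl⟩ := exists_isTournament_imbalance_eq hN (fun i => heven _ (hts i)) hsum'
    (sum_le_card_mul_card_compl hsum' (fun i => hbound _ (hts i)) (by simpa using hab))
  refine ⟨r, hr, ?_⟩
  ext x
  simp [imbalanceSet, ← hm]

theorem even_tournament_of_x_eq_add_general (X Y : Finset ℤ)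
    (hX : ∀ x ∈ X, 0 ≤ x ∧ Even x) (hY : ∀ y ∈ Y, y < 0 ∧ Even y)
    (L M : ℤ) (hL : L = ∑ x ∈ X, x) (hM : M = ∑ y ∈ Y, -y)
    (n : ℕ) (hn : (n : ℤ) = X.card * M + Y.card * L)
    (h : ∃ xp ∈ X, ∃ yq yr : ℤ, -yq ∈ Y ∧ -yr ∈ Y ∧ xp = yq + yr) :
    ∃ r : Fin (n + 3) → Fin (n + 3) → Bool,
      IsTournament r ∧ imbalanceSet r = X ∪ Y := by
  obtain ⟨xp, hxp, yq, yr, hyq, hyr, rfl⟩ := h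
  have hYsum : ∑ y ∈ Y, y = -M := by rw [hM, sum_neg_distrib, neg_neg]
  have hbound : ∀ a ∈ X ∪ Y, a ∈ Set.Icc (-M) L := fun a ha => by
    rw [hL, ← hYsum]
    exact mem_Icc_sum_of_mem_union (fun x hx => (hX x hx).1) (fun y hy => (hY y hy).1.le) ha
  have heven : ∀ a ∈ X ∪ Y, Even a := fun a ha => by
    rcases mem_union.1 ha with h | h
    exacts [(hX a h).2, (hY a h).2]
  have hM0 : 0 < M := by linarith [(hbound _ (mem_union_right _ hyq)).1, (hY _ hyq).1]
  have hL0 : 0 < L := by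
    linarith [(hbound _ (mem_union_left _ hxp)).2, (hY _ hyq).1, (hY _ hyr).1]
  set m : Multiset ℤ := M.toNat • X.val + L.toNat • Y.val + {yq + yr, -yq, -yr}
  have hmem : ∀ a, a ∈ m ↔ a ∈ X ∪ Y :=
    Multiset.mem_nsmul_add_nsmul_add_iff (by omega) (by omega) (by simp [hxp, hyq, hyr])
  have hcard : Multiset.card m = n + 3 := by
    zify
    simp [m, Int.toNat_of_nonneg hM0.le, Int.toNat_of_nonneg hL0.le, hn]
    ring
  have hsum : m.sum = 0 := by
    simp [m, Multiset.sum_nsmul, Int.toNat_of_nonneg hM0.le, Int.toNat_of_nonneg hL0.le, ← hL,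
      hYsum]
    ring
  have hodd : Odd (n + 3) := by
    have hMe : Even M := hM ▸ even_sum _ fun y hy => (hY y hy).2.neg
    have hLe : Even L := hL ▸ even_sum _ fun x hx => (hX x hx).2
    have hne : Even (n : ℤ) := hn ▸ (hMe.mul_left _).add (hLe.mul_left _)
    exact (Int.even_coe_nat n).1 hne |>.add_odd (by decide)
  have hLM : L - -M ≤ ((n + 3 : ℕ) : ℤ) := by
    have hXc : (1 : ℤ) ≤ X.card := by exact_mod_cast card_pos.2 ⟨_, hxp⟩
    have hYc : (1 : ℤ) ≤ Y.card := by exact_mod_cast card_pos.2 ⟨_, hyq⟩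
    push_cast
    nlinarith
  exact exists_isTournament_imbalanceSet_eq hmem hcard hodd hsum heven hbound hLM

/-- If some `x_p ∈ X` equals `y_q + y_r` with `-y_q, -y_r ∈ Y`, then
there is a tournament of order `n + 3` with imbalance set `X ∪ Y`. -/
theorem even_tournament_of_x_eq_add (X Y : Finset ℤ)
    (hXne : X.Nonempty) (hYne : Y.Nonempty) (hdisj : Disjoint X Y)
    (hX : ∀ x ∈ X, 0 ≤ x ∧ Even x) (hY : ∀ y ∈ Y, y < 0 ∧ Even y)
    (hXY : X ∪ Y ≠ {0})
    (L M : ℤ) (hL : L = ∑ x ∈ X, x) (hM : M = ∑ y ∈ Y, -y)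
    (n : ℕ) (hn : (n : ℤ) = X.card * M + Y.card * L)
    (h : ∃ xp ∈ X, ∃ yq yr : ℤ, -yq ∈ Y ∧ -yr ∈ Y ∧ xp = yq + yr) :
    ∃ r : Fin (n + 3) → Fin (n + 3) → Bool,
      IsTournament r ∧ imbalanceSet r = X ∪ Y :=
  even_tournament_of_x_eq_add_general X Y hX hY L M hL hM n hn h
end

section
/- Let Z be a finite set of integers such that either Z is empty, or Z contains at least one positive even integer and at least one negative even integer and consists only of even integers. Then Z ∪ {0} is the imbalance set of some tournament. -/
open Finset

section Flip

variable {n : ℕ}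

lemma imbalance_eq_sum (r : Fin n → Fin n → Bool) (v : Fin n) :
    imbalance r v = ∑ j, ((if r v j then 1 else 0) - (if r j v then 1 else 0) : ℤ) := by
  rw [imbalance, outdeg, indeg, sum_sub_distrib, sum_boole, sum_boole]

lemma IsTournament.eq_false_of_eq_true {r : Fin n → Fin n → Bool} (hr : IsTournament r)
    {i j : Fin n} (h : r i j = true) : r j i = false := by
  by_cases hij : i = j
  · subst hij
    simp [hr.1 i] at h
  · simpa [hr.2 i j hij] using h

def flipArcs (r E : Fin n → Fin n → Bool) (i j : Fin n) : Bool :=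
  xor (r i j) (E i j)

lemma IsTournament.flipArcs {r E : Fin n → Fin n → Bool} (hr : IsTournament r)
    (hE : ∀ i j, E i j = E j i) (hE_self : ∀ i, E i i = false) :
    IsTournament (flipArcs r E) := by
  refine ⟨fun i => by simp [_root_.flipArcs, hr.1 i, hE_self i], fun i j hij => ?_⟩
  simp [_root_.flipArcs, hr.2 i j hij, hE i j]

lemma imbalance_flipArcs {r E : Fin n → Fin n → Bool} (hE : ∀ i j, E i j = E j i)
    (v : Fin n) :
    imbalance (flipArcs r E) v = imbalance r v
      - 2 * ∑ j with E v j, ((if r v j then 1 else 0) - (if r j v then 1 else 0) : ℤ) := by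
  rw [imbalance_eq_sum, imbalance_eq_sum, sum_filter, mul_sum, ← sum_sub_distrib]
  refine sum_congr rfl fun j _ => ?_
  rw [flipArcs, flipArcs, hE j v]
  cases r v j <;> cases r j v <;> cases E v j <;> rfl

lemma imbalance_flipArcs_of_linked_beat {r E : Fin n → Fin n → Bool} (hr : IsTournament r)
    (hE : ∀ i j, E i j = E j i) {v : Fin n} (hv : ∀ j, E v j = true → r j v = true) :
    imbalance (flipArcs r E) v = imbalance r v + 2 * #{j | E v j} := by
  have hterm : ∀ j ∈ ({j | E v j} : Finset (Fin n)),
      ((if r v j then 1 else 0) - (if r j v then 1 else 0) : ℤ) = -1 := fun j hj => by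
    have hjv := hv j (mem_filter.mp hj).2
    simp [hjv, hr.eq_false_of_eq_true hjv]
  rw [imbalance_flipArcs hE, sum_congr rfl hterm]
  simp

lemma imbalance_flipArcs_of_beats_linked {r E : Fin n → Fin n → Bool} (hr : IsTournament r)
    (hE : ∀ i j, E i j = E j i) {v : Fin n} (hv : ∀ j, E v j = true → r v j = true) :
    imbalance (flipArcs r E) v = imbalance r v - 2 * #{j | E v j} := by
  have hterm : ∀ j ∈ ({j | E v j} : Finset (Fin n)),
      ((if r v j then 1 else 0) - (if r j v then 1 else 0) : ℤ) = 1 := fun j hj => by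
    have hvj := hv j (mem_filter.mp hj).2
    simp [hvj, hr.eq_false_of_eq_true hvj]
  rw [imbalance_flipArcs hE, sum_congr rfl hterm]
  simp

end Flip

section Rotational

variable {m : ℕ}

def rotational (m : ℕ) (i j : Fin (2 * m + 1)) : Bool :=
  decide (1 ≤ (j - i).val ∧ (j - i).val ≤ m)

lemma isTournament_rotational (m : ℕ) : IsTournament (rotational m) := by
  refine ⟨fun i => by simp [rotational], fun i j hij => ?_⟩
  rcases lt_or_gt_of_ne hij with h | h <;>
  · have h' := Fin.lt_def.mp h
    rw [rotational, rotational, Bool.eq_not_iff, ne_eq, decide_eq_decide,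
      Fin.coe_sub_iff_le.mpr h.le, Fin.coe_sub_iff_lt.mpr h]
    omega

lemma imbalance_rotational (v : Fin (2 * m + 1)) : imbalance (rotational m) v = 0 := by
  have hout : outdeg (rotational m) v = #{d : Fin (2 * m + 1) | 1 ≤ d.val ∧ d.val ≤ m} :=
    card_equiv (Equiv.subRight v) (by simp [rotational])
  have hin : indeg (rotational m) v = #{d : Fin (2 * m + 1) | 1 ≤ d.val ∧ d.val ≤ m} :=
    card_equiv (Equiv.subLeft v) (by simp [rotational])
  rw [imbalance, hout, hin, sub_self]

lemma rotational_of_lt {i j : Fin (2 * m + 1)} (hij : i < j) (hji : j.val ≤ i.val + m) :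
    rotational m i j = true := by
  rw [Fin.lt_def] at hij
  simp only [rotational, Fin.coe_sub_iff_le.mpr hij.le, decide_eq_true_eq]
  omega

end Rotational

lemma card_filter_getElem?_eq_count {β : Type*} [DecidableEq β] (L : List β) {n : ℕ}
    (hn : L.length ≤ n) (b : β) : #{j : Fin n | L[j.val]? = some b} = L.count b := by
  rw [card_filter, Fin.sum_univ_eq_sum_range (fun i => if L[i]? = some b then 1 else 0)]
  induction L generalizing n with
  | nil => simp
  | cons a L ih =>
    cases n with
    | zero => simp at hn
    | succ n =>
      simp only [sum_range_succ', List.getElem?_cons_succ, List.getElem?_cons_zero]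
      rw [ih (by simpa using hn), List.count_cons]
      simp

section Blocks

variable {α : Type*}

/-- Vertex `i` of `blockTournament LM LP` carries the tag `(blockTags LM LP)[i]?`: `(false, x)`
marks a minus vertex and `(true, x)` a plus vertex of the block labelled `x`, and the vertices past
the end of the list are untagged. Minus vertices come first, so in the rotational tournament each of
them beats each plus vertex; the arcs reversed are those between `linked` vertices, i.e. a minus and
a plus vertex with the same label. -/
def blockTags (LM LP : List α) : List (Bool × α) :=
  LM.map (false, ·) ++ LP.map (true, ·)

def linked [DecidableEq α] (L : List (Bool × α)) {n : ℕ} (i j : Fin n) : Bool :=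
  match L[i.val]?, L[j.val]? with
  | some (b, x), some (c, y) => b != c && x == y
  | _, _ => false

def blockTournament [DecidableEq α] (LM LP : List α) :
    Fin (2 * (LM.length + LP.length) + 1) → Fin (2 * (LM.length + LP.length) + 1) → Bool :=
  flipArcs (rotational _) (linked (blockTags LM LP))

variable {LM LP : List α} {n : ℕ}

lemma length_blockTags : (blockTags LM LP).length = LM.length + LP.length := by
  simp [blockTags]

lemma blockTags_getElem?_eq_false {i : ℕ} {x : α} (h : (blockTags LM LP)[i]? = some (false, x)) :
    i < LM.length ∧ x ∈ LM := by
  unfold blockTags at h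
  rcases lt_or_ge i LM.length with hi | hi
  · rw [List.getElem?_append_left (by simpa using hi)] at h
    simp only [List.getElem?_map, Option.map_eq_some_iff, Prod.mk.injEq, true_and,
      exists_eq_right] at h
    exact ⟨hi, List.mem_of_getElem? h⟩
  · rw [List.getElem?_append_right (by simpa using hi)] at h
    simp at h

lemma blockTags_getElem?_eq_true {i : ℕ} {x : α} (h : (blockTags LM LP)[i]? = some (true, x)) :
    LM.length ≤ i ∧ i < LM.length + LP.length ∧ x ∈ LP := by
  unfold blockTags at h
  rcases lt_or_ge i LM.length with hi | hi
  · rw [List.getElem?_append_left (by simpa using hi)] at h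
    simp at h
  · rw [List.getElem?_append_right (by simpa using hi)] at h
    simp only [List.length_map, List.getElem?_map, Option.map_eq_some_iff, Prod.mk.injEq,
      true_and, exists_eq_right] at h
    have := (List.getElem?_eq_some_iff.mp h).1
    exact ⟨hi, by omega, List.mem_of_getElem? h⟩

variable [DecidableEq α]

lemma linked_comm (L : List (Bool × α)) (i j : Fin n) : linked L i j = linked L j i := by
  unfold linked
  rcases L[i.val]? with _ | ⟨b, x⟩ <;> rcases L[j.val]? with _ | ⟨c, y⟩ <;>
    simp only [bne_comm]
  cases b <;> cases c <;> simp [eq_comm]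

lemma linked_self (L : List (Bool × α)) (i : Fin n) : linked L i i = false := by
  unfold linked
  rcases L[i.val]? with _ | ⟨b, x⟩ <;> simp

lemma linked_iff_of_getElem? {L : List (Bool × α)} {i : Fin n} {b : Bool} {x : α}
    (hi : L[i.val]? = some (b, x)) (j : Fin n) :
    linked L i j = true ↔ L[j.val]? = some (!b, x) := by
  unfold linked
  rw [hi]
  rcases L[j.val]? with _ | ⟨c, y⟩
  · simp
  · simp only [Bool.and_eq_true, bne_iff_ne, beq_iff_eq, Option.some.injEq, Prod.mk.injEq]
    cases b <;> cases c <;> simp [eq_comm]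

lemma isTournament_blockTournament (LM LP : List α) : IsTournament (blockTournament LM LP) :=
  (isTournament_rotational _).flipArcs (linked_comm _) (linked_self _)

lemma card_blockTags_eq (hn : LM.length + LP.length ≤ n) (b : Bool) (x : α) :
    #{j : Fin n | (blockTags LM LP)[j.val]? = some (b, x)} = (if b then LP else LM).count x := by
  rw [card_filter_getElem?_eq_count _ (length_blockTags ▸ hn), blockTags]
  simp only [List.count_append]
  cases b
  · simp [List.count_map_of_injective _ _ (Prod.mk_right_injective false),
      List.count_eq_zero]
  · simp [List.count_map_of_injective _ _ (Prod.mk_right_injective true),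
      List.count_eq_zero]

lemma imbalance_blockTournament_of_minus {v : Fin (2 * (LM.length + LP.length) + 1)} {x : α}
    (hv : (blockTags LM LP)[v.val]? = some (false, x)) :
    imbalance (blockTournament LM LP) v = -2 * LP.count x := by
  have hvM := (blockTags_getElem?_eq_false hv).1
  rw [blockTournament, imbalance_flipArcs_of_beats_linked (isTournament_rotational _)
    (linked_comm _), imbalance_rotational, filter_congr fun j _ => linked_iff_of_getElem? hv j,
    Bool.not_false, card_blockTags_eq (by omega)]
  · simp
  · intro j hj
    have hjP := blockTags_getElem?_eq_true ((linked_iff_of_getElem? hv j).mp hj)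
    exact rotational_of_lt (Fin.lt_def.mpr (by omega)) (by omega)

lemma imbalance_blockTournament_of_plus {v : Fin (2 * (LM.length + LP.length) + 1)} {x : α}
    (hv : (blockTags LM LP)[v.val]? = some (true, x)) :
    imbalance (blockTournament LM LP) v = 2 * LM.count x := by
  have hvP := blockTags_getElem?_eq_true hv
  rw [blockTournament, imbalance_flipArcs_of_linked_beat (isTournament_rotational _)
    (linked_comm _), imbalance_rotational, filter_congr fun j _ => linked_iff_of_getElem? hv j,
    Bool.not_true, card_blockTags_eq (by omega)]
  · simp
  · intro j hj
    have hjM := blockTags_getElem?_eq_false ((linked_iff_of_getElem? hv j).mp hj)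
    exact rotational_of_lt (Fin.lt_def.mpr (by omega)) (by omega)

lemma imbalance_blockTournament_of_untagged {v : Fin (2 * (LM.length + LP.length) + 1)}
    (hv : (blockTags LM LP)[v.val]? = none) : imbalance (blockTournament LM LP) v = 0 := by
  have hE : ∀ j ∈ (univ : Finset (Fin _)), linked (blockTags LM LP) v j ≠ true := by
    simp [linked, hv]
  rw [blockTournament, imbalance_flipArcs (linked_comm _), imbalance_rotational,
    filter_false_of_mem hE]
  simp

lemma imbalanceSet_blockTournament (LM LP : List α) :
    imbalanceSet (blockTournament LM LP) = insert 0
      (LP.toFinset.image (fun x => 2 * (LM.count x : ℤ)) ∪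
        LM.toFinset.image (fun x => -2 * (LP.count x : ℤ))) := by
  ext z
  simp only [imbalanceSet, mem_image, mem_univ, true_and, mem_insert, mem_union,
    List.mem_toFinset]
  constructor
  · rintro ⟨v, rfl⟩
    rcases h : (blockTags LM LP)[v.val]? with _ | ⟨_ | _, x⟩
    · exact .inl (imbalance_blockTournament_of_untagged h)
    · exact .inr (.inr ⟨x, (blockTags_getElem?_eq_false h).2,
        (imbalance_blockTournament_of_minus h).symm⟩)
    · exact .inr (.inl ⟨x, (blockTags_getElem?_eq_true h).2.2,
        (imbalance_blockTournament_of_plus h).symm⟩)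
  · rintro (rfl | ⟨x, hx, rfl⟩ | ⟨x, hx, rfl⟩)
    · exact ⟨⟨LM.length + LP.length, by omega⟩,
        imbalance_blockTournament_of_untagged (by simp [length_blockTags])⟩
    · obtain ⟨i, hi⟩ := List.mem_iff_getElem?.mp
        (show (true, x) ∈ blockTags LM LP by simp [blockTags, hx])
      have := (blockTags_getElem?_eq_true hi).2.1
      exact ⟨⟨i, by omega⟩, imbalance_blockTournament_of_plus hi⟩
    · obtain ⟨i, hi⟩ := List.mem_iff_getElem?.mp
        (show (false, x) ∈ blockTags LM LP by simp [blockTags, hx])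
      have := (blockTags_getElem?_eq_false hi).1
      exact ⟨⟨i, by omega⟩, imbalance_blockTournament_of_minus hi⟩

end Blocks

lemma exists_list_count_eq {β : Type*} [DecidableEq β] (S : Finset β) (f : β → ℕ)
    (hf : ∀ x ∈ S, 0 < f x) :
    ∃ L : List β, L.toFinset = S ∧ ∀ x ∈ S, L.count x = f x := by
  have hcount : ∀ x, (∑ y ∈ S, Multiset.replicate (f y) y).toList.count x =
      if x ∈ S then f x else 0 := fun x => by
    rw [← Multiset.coe_count, Multiset.coe_toList, Multiset.count_sum']
    simp [Multiset.count_replicate]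
  refine ⟨_, ?_, fun x hx => by rw [hcount, if_pos hx]⟩
  ext x
  rw [List.mem_toFinset, ← List.count_pos_iff, hcount]
  split_ifs with hx <;> simp [hx, hf x]

theorem exists_isTournament_imbalanceSet_eq_s12 {α : Type*} [DecidableEq α] (S : Finset α)
    (a b : α → ℕ) (ha : ∀ x ∈ S, 0 < a x) (hb : ∀ x ∈ S, 0 < b x) :
    ∃ (n : ℕ) (r : Fin n → Fin n → Bool), IsTournament r ∧
      imbalanceSet r = insert 0 (S.image (fun x => 2 * (a x : ℤ)) ∪
        S.image (fun x => -2 * (b x : ℤ))) := by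
  obtain ⟨LM, hLM, hLM_count⟩ := exists_list_count_eq S a ha
  obtain ⟨LP, hLP, hLP_count⟩ := exists_list_count_eq S b hb
  refine ⟨_, blockTournament LM LP, isTournament_blockTournament LM LP, ?_⟩
  rw [imbalanceSet_blockTournament, hLM, hLP]
  congr 2 <;> refine image_congr fun x hx => ?_ <;> simp [hLM_count x hx, hLP_count x hx]

/-- If `Z` is empty, or `Z` consists of even integers and contains
a positive and a negative element, then `Z ∪ {0}` is a tournament imbalance set. -/
theorem insert_zero_imbalanceSet (Z : Finset ℤ)
    (h : Z = ∅ ∨ ((∀ z ∈ Z, Even z) ∧ (∃ z ∈ Z, 0 < z) ∧ (∃ z ∈ Z, z < 0))) :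
    ∃ (n : ℕ) (r : Fin n → Fin n → Bool),
      IsTournament r ∧ imbalanceSet r = insert 0 Z := by
  rcases h with rfl | ⟨heven, ⟨p, hp, hp0⟩, q, hq, hq0⟩
  · simpa using exists_isTournament_imbalanceSet_eq_s12 (∅ : Finset Unit) 0 0 (by simp) (by simp)
  set P := Z.filter (0 < ·)
  set N := Z.filter (· < 0)
  have hhalf : ∀ x ∈ P ×ˢ N, 2 * ((x.1 / 2).toNat : ℤ) = x.1 ∧ 0 < x.1 / 2 ∧
      -2 * ((-x.2 / 2).toNat : ℤ) = x.2 ∧ 0 < -x.2 / 2 := by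
    intro x hx
    simp only [mem_product, P, N, mem_filter] at hx
    obtain ⟨a, ha⟩ := heven _ hx.1.1
    obtain ⟨b, hb⟩ := heven _ hx.2.1
    omega
  obtain ⟨n, r, hr, himb⟩ := exists_isTournament_imbalanceSet_eq_s12 (P ×ˢ N)
    (fun x => (x.1 / 2).toNat) (fun x => (-x.2 / 2).toNat)
    (fun x hx => by simpa using (hhalf x hx).2.1) (fun x hx => by simpa using (hhalf x hx).2.2.2)
  refine ⟨n, r, hr, ?_⟩
  rw [himb, image_congr fun x hx => (hhalf x hx).1, image_congr fun x hx => (hhalf x hx).2.2.1,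
    product_image_fst ⟨q, by simp [N, hq, hq0]⟩,
    product_image_snd ⟨p, by simp [P, hp, hp0]⟩]
  ext z
  simp only [mem_insert, mem_union, P, N, mem_filter, ← and_or_left]
  rcases eq_or_ne z 0 with rfl | hz
  · simp
  · simp [hz, hz.symm]
end
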